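/- arXiv:1005.4591 — 2 statements merged into one kernel-verified Lean document; each statement's English description precedes it below -/
import Mathlib

section
/- If α is a root of h(t) = t^3 + 4t^2 + 3t − 1, then the number field Q(α) is a Galois (cyclic) cubic extension of Q. -/
/-!
The map `t ↦ t ^ 2 + 2 * t - 2` sends a root of `h` to another root, and iterating it from `α`
yields all three roots (their elementary symmetric functions are `-4, 3, 1` modulo `h(α)`).
So `h`, which is irreducible already modulo 2, splits in `ℚ(α)`; hence `ℚ(α)` is Galois of
degree 3 over `ℚ`, and a group of prime order is cyclic.
-/

open IntermediateField Polynomial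

theorem IntermediateField.isGalois_adjoin_simple_of_splits {F E : Type*} [Field F] [Field E]
    [Algebra F E] {α : E} (hα : IsIntegral F α) (h_sep : IsSeparable F α)
    (h_splits : ((minpoly F α).map (algebraMap F F⟮α⟯)).Splits) : IsGalois F F⟮α⟯ := by
  have := adjoin.finiteDimensional hα
  refine IsGalois.of_card_aut_eq_finrank F F⟮α⟯ ?_
  rw [adjoin.finrank hα, ← card_algHom_adjoin_integral F hα h_sep h_splits]
  exact Nat.card_congr (algEquivEquivAlgHom F F⟮α⟯)

theorem IsGalois.isCyclic_of_finrank_prime {F E : Type*} [Field F] [Field E] [Algebra F E]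
    [FiniteDimensional F E] [IsGalois F E] {p : ℕ} [Fact p.Prime] (h : Module.finrank F E = p) :
    IsCyclic Gal(E/F) :=
  isCyclic_of_prime_card ((IsGalois.card_aut_eq_finrank F E).trans h)

section hPoly

variable {R S : Type*} [CommRing R] [CommRing S]

variable (R) in
noncomputable def hPoly : R[X] := X ^ 3 + 4 * X ^ 2 + 3 * X - 1

theorem hPoly_monic [Nontrivial R] : (hPoly R).Monic := by unfold hPoly; monicity!

theorem hPoly_natDegree [Nontrivial R] : (hPoly R).natDegree = 3 := by
  unfold hPoly; compute_degree!

@[simp]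
theorem hPoly_map (f : R →+* S) : (hPoly R).map f = hPoly S := by
  simp [hPoly]

theorem aeval_hPoly [Algebra R S] (x : S) : aeval x (hPoly R) = x ^ 3 + 4 * x ^ 2 + 3 * x - 1 := by
  simp [hPoly, map_ofNat]

theorem isRoot_hPoly_iff {a : R} : (hPoly R).IsRoot a ↔ a ^ 3 + 4 * a ^ 2 + 3 * a - 1 = 0 := by
  simp [hPoly]

def nextRoot (a : R) : R := a ^ 2 + 2 * a - 2

theorem hPoly_eq_prod_of_isRoot {a : R} (ha : (hPoly R).IsRoot a) :
    hPoly R = (X - C a) * (X - C (nextRoot a)) * (X - C (nextRoot (nextRoot a))) := by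
  have hCa : C a ^ 3 + 4 * C a ^ 2 + 3 * C a - 1 = (0 : R[X]) := by
    simpa only [map_sub, map_add, map_mul, map_pow, map_ofNat, map_one, map_zero] using
      congrArg C (isRoot_hPoly_iff.mp ha)
  simp only [hPoly, nextRoot, map_sub, map_add, map_mul, map_pow, map_ofNat]
  linear_combination (C a * X ^ 2 - (C a ^ 3 + 3 * C a ^ 2 - 3 * C a - 1) * X
    + (C a ^ 4 + 2 * C a ^ 3 - 3 * C a ^ 2 - C a + 1)) * hCa

theorem hPoly_splits_of_isRoot {a : R} (ha : (hPoly R).IsRoot a) : (hPoly R).Splits := by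
  rw [hPoly_eq_prod_of_isRoot ha]
  exact ((Splits.X_sub_C _).mul (Splits.X_sub_C _)).mul (Splits.X_sub_C _)

theorem irreducible_hPoly_zmod_two : Irreducible (hPoly (ZMod 2)) := by
  rw [irreducible_iff_roots_eq_zero_of_degree_le_three (by rw [hPoly_natDegree]; omega)
    (by rw [hPoly_natDegree]), Multiset.eq_zero_iff_forall_notMem]
  intro a ha
  rw [mem_roots hPoly_monic.ne_zero, isRoot_hPoly_iff] at ha
  revert a ha
  decide

theorem irreducible_hPoly_rat : Irreducible (hPoly ℚ) := by
  have hZ : Irreducible (hPoly ℤ) := hPoly_monic.irreducible_of_irreducible_map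
    (Int.castRingHom (ZMod 2)) _ (by rw [hPoly_map]; exact irreducible_hPoly_zmod_two)
  simpa using (IsPrimitive.Int.irreducible_iff_irreducible_map_cast hPoly_monic.isPrimitive).mp hZ

end hPoly

/-- If `α` is a root of `h(t) = t^3 + 4t^2 + 3t - 1`, then `ℚ(α)` is a Galois cubic
extension of `ℚ`, with cyclic Galois group (of order 3). -/
theorem stmt_5 (α : ℂ) (hα : α ^ 3 + 4 * α ^ 2 + 3 * α - 1 = 0) :
    IsGalois ℚ ℚ⟮α⟯ ∧ Module.finrank ℚ ℚ⟮α⟯ = 3 ∧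
    IsCyclic (ℚ⟮α⟯ ≃ₐ[ℚ] ℚ⟮α⟯) := by
  have haeval : aeval α (hPoly ℚ) = 0 := by rw [aeval_hPoly, hα]
  have hint : IsIntegral ℚ α := ⟨hPoly ℚ, hPoly_monic, haeval⟩
  have hmin : minpoly ℚ α = hPoly ℚ :=
    (minpoly.eq_of_irreducible_of_monic irreducible_hPoly_rat haeval hPoly_monic).symm
  have hgen : (hPoly ℚ⟮α⟯).IsRoot (AdjoinSimple.gen ℚ α) :=
    isRoot_hPoly_iff.mpr (Subtype.ext hα)
  have hGal : IsGalois ℚ ℚ⟮α⟯ := isGalois_adjoin_simple_of_splits hint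
    (minpoly.irreducible hint).separable
    (by rw [hmin, hPoly_map]; exact hPoly_splits_of_isRoot hgen)
  have hfin : Module.finrank ℚ ℚ⟮α⟯ = 3 := by rw [adjoin.finrank hint, hmin, hPoly_natDegree]
  have := adjoin.finiteDimensional hint
  have : Fact (Nat.Prime 3) := ⟨Nat.prime_three⟩
  exact ⟨hGal, hfin, IsGalois.isCyclic_of_finrank_prime hfin⟩
end

section
/- All roots of the polynomial t^4 + 5t^3 + 5t^2 − 5t − 5 are real and lie in the open interval (−2√2, 2√2). -/
/-- A complex root of a real monic quadratic with nonnegative discriminant is real. -/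
lemma quad_real_root (A B : ℝ) (z : ℂ) (hz : z ^ 2 + (A : ℂ) * z + (B : ℂ) = 0)
    (hD : 0 ≤ A ^ 2 - 4 * B) : ∃ r : ℝ, z = (r : ℝ) := by
  set D := A ^ 2 - 4 * B with hDdef
  have hs : (Real.sqrt D : ℂ) ^ 2 = (A : ℂ) ^ 2 - 4 * (B : ℂ) := by
    have : Real.sqrt D ^ 2 = A ^ 2 - 4 * B := by rw [Real.sq_sqrt hD]
    exact_mod_cast this
  have hfac : (z - ((-A + Real.sqrt D) / 2 : ℝ)) * (z - ((-A - Real.sqrt D) / 2 : ℝ)) = 0 := by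
    push_cast
    linear_combination hz - (1 / 4 : ℂ) * hs
  rcases mul_eq_zero.1 hfac with h | h
  · exact ⟨(-A + Real.sqrt D) / 2, by linear_combination h⟩
  · exact ⟨(-A - Real.sqrt D) / 2, by linear_combination h⟩

lemma real_root_bound (x : ℝ) (hx : x ^ 4 + 5 * x ^ 3 + 5 * x ^ 2 - 5 * x - 5 = 0) :
    |x| < 2 * Real.sqrt 2 := by
  have hs0 : (0:ℝ) ≤ 2 := by norm_num
  have hs2 : Real.sqrt 2 ^ 2 = 2 := Real.sq_sqrt hs0
  have hs1 : Real.sqrt 2 > 1.414 := by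
    nlinarith [Real.sqrt_nonneg 2, hs2]
  set s := Real.sqrt 2 with hsdef
  rw [abs_lt]
  constructor
  · by_contra h
    push_neg at h
    have hx2 : x ≤ -2 * s := by linarith
    nlinarith [sq_nonneg (x + 2 * s), sq_nonneg (x + 3), sq_nonneg (x + 2 * s + 1),
      mul_nonneg (mul_nonneg (neg_nonneg.2 (by nlinarith : x + 2 * s ≤ 0))
        (neg_nonneg.2 (by nlinarith : x + 2 * s ≤ 0)))
        (neg_nonneg.2 (by nlinarith : x + 2 * s ≤ 0)), hs2, hs1]
  · by_contra h
    push_neg at h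
    nlinarith [hs2, hs1, sq_nonneg x, sq_nonneg (x - 2 * s)]

/-- All roots of `t^4 + 5t^3 + 5t^2 - 5t - 5` are real and lie in the open interval
`(-2√2, 2√2)`. -/
theorem stmt_11 :
    ∀ z : ℂ, z ^ 4 + 5 * z ^ 3 + 5 * z ^ 2 - 5 * z - 5 = 0 →
      ∃ r : ℝ, z = (r : ℂ) ∧ |r| < 2 * Real.sqrt 2 := by
  intro z hz
  have h5 : (0:ℝ) ≤ 5 := by norm_num
  have h5' : (Real.sqrt 5 : ℂ) ^ 2 = 5 := by
    norm_cast
    exact Real.sq_sqrt h5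
  have hs5 : Real.sqrt 5 > 2.236 := by
    nlinarith [Real.sqrt_nonneg 5, Real.sq_sqrt h5]
  have hs5' : Real.sqrt 5 < 2.2361 := by
    nlinarith [Real.sqrt_nonneg 5, Real.sq_sqrt h5]
  set t := Real.sqrt 5 with htdef
  have hfac : (z ^ 2 + (((5 + t) / 2 : ℝ) : ℂ) * z + ((t : ℝ) : ℂ)) *
      (z ^ 2 + (((5 - t) / 2 : ℝ) : ℂ) * z + ((-t : ℝ) : ℂ)) = 0 := by
    push_cast
    linear_combination hz - ((1/4 : ℂ) * z ^ 2 + z + 1) * h5'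
  have hreal : ∃ r : ℝ, z = (r : ℝ) := by
    rcases mul_eq_zero.1 hfac with h | h
    · exact quad_real_root _ _ _ h (by nlinarith)
    · exact quad_real_root _ _ _ h (by nlinarith)
  obtain ⟨r, hr⟩ := hreal
  refine ⟨r, hr, ?_⟩
  apply real_root_bound
  have : ((r : ℂ)) ^ 4 + 5 * (r:ℂ) ^ 3 + 5 * (r:ℂ) ^ 2 - 5 * (r:ℂ) - 5 = 0 := by
    rw [← hr]; exact hz
  exact_mod_cast this
end
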